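/- Theorem 2 (CSP, individual recovery under deterministic noise). Fix τ1 > 0, τ2 ∈ (0,1) and ζ ≥ 0. Then with P-probability at least 1 − 2^r·exp((d/2)(τ2 + log(1−τ2))) − exp(−(d/2)(τ1 − log(1+τ1))), the matrix A has the following property: for every noise vector z ∈ ℝ^d with ‖z‖₂ ≤ ζ, every CSP estimate x̂ computed from the noisy measurements y = A x_o + z satisfies ‖x̂ − x_o‖₂ ≤ δ·√((1+τ1)/(1−τ2)) + 2ζ/√((1−τ2)·d). -/

import Mathlib

open MeasureTheory ProbabilityTheory

/-- The Euclidean (`ℓ₂`) norm of a vector in `ℝ^m`. -/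
noncomputable def norm2 {m : ℕ} (x : Fin m → ℝ) : ℝ := Real.sqrt (∑ i, (x i) ^ 2)

/-- The action of a `d × n` matrix `A` on a vector `x ∈ ℝ^n`. -/
def mulVec' {d n : ℕ} (A : Fin d → Fin n → ℝ) (x : Fin n → ℝ) : Fin d → ℝ :=
  fun i => ∑ j, A i j * x j

/-- `xhat` is a CSP estimate for measurements `y` (w.r.t. codebook `C` and matrix `A`):
it belongs to `C` and minimizes `‖y - A c‖₂` over `c ∈ C`. -/
def IsCSPEstimate {d n : ℕ} (C : Finset (Fin n → ℝ)) (A : Fin d → Fin n → ℝ)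
    (y : Fin d → ℝ) (xhat : Fin n → ℝ) : Prop :=
  xhat ∈ C ∧ ∀ c ∈ C, norm2 (y - mulVec' A xhat) ≤ norm2 (y - mulVec' A c)

/-- The law of a `d × n` matrix with i.i.d. standard Gaussian `N(0,1)` entries. -/
noncomputable def gaussMatrix (d n : ℕ) : Measure (Fin d → Fin n → ℝ) :=
  Measure.pi fun _ => Measure.pi fun _ => gaussianReal 0 1

/-!
For a fixed vector `v`, the rows of a standard Gaussian matrix `A` give `d` independent
`N(0, ‖v‖²)` coordinates of `A v`, so `‖A v‖² / ‖v‖²` is a `χ²_d` variable with moment generating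
function `(1 - 2t)^(-d/2)`. Chernoff's bound then makes `‖A (c - x_o)‖² ≥ (1 - τ₂) d ‖c - x_o‖²`
fail with probability at most `exp((d/2)(τ₂ + log(1 - τ₂)))` for each of the `≤ 2^r` codewords `c`,
and `‖A (x_o - x̃)‖² ≤ (1 + τ₁) d ‖x_o - x̃‖²` fail with probability at most
`exp(-(d/2)(τ₁ - log(1 + τ₁)))`. Outside these events, minimality of `x̂` gives
`‖A (x̂ - x_o)‖ ≤ ‖A (x_o - x̃)‖ + 2‖z‖`, which rescales to the claimed bound.
-/

open Real
open scoped NNReal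

lemma norm2_eq_norm_toLp {m : ℕ} (x : Fin m → ℝ) : norm2 x = ‖WithLp.toLp 2 x‖ := by
  simp [EuclideanSpace.norm_eq, norm2]

lemma norm2_nonneg {m : ℕ} (x : Fin m → ℝ) : 0 ≤ norm2 x := sqrt_nonneg _

lemma norm2_eq_zero {m : ℕ} {x : Fin m → ℝ} : norm2 x = 0 ↔ x = 0 := by
  simp [norm2_eq_norm_toLp]

lemma norm2_add_le {m : ℕ} (x y : Fin m → ℝ) : norm2 (x + y) ≤ norm2 x + norm2 y := by
  simpa only [norm2_eq_norm_toLp, WithLp.toLp_add] using norm_add_le _ _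

lemma norm2_sub_comm {m : ℕ} (x y : Fin m → ℝ) : norm2 (x - y) = norm2 (y - x) := by
  simp only [norm2_eq_norm_toLp, WithLp.toLp_sub, norm_sub_rev]

lemma norm2_sq {m : ℕ} (x : Fin m → ℝ) : norm2 x ^ 2 = ∑ i, x i ^ 2 :=
  sq_sqrt (by positivity)

lemma mulVec'_sub {d n : ℕ} (A : Fin d → Fin n → ℝ) (x y : Fin n → ℝ) :
    mulVec' A (x - y) = mulVec' A x - mulVec' A y := by
  ext i
  simp [mulVec', mul_sub, Finset.sum_sub_distrib]

lemma mulVec'_zero {d n : ℕ} (A : Fin d → Fin n → ℝ) : mulVec' A 0 = 0 := by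
  ext i
  simp [mulVec']

lemma integral_exp_mul_sq_gaussianReal {v : ℝ≥0} {c : ℝ} (h : 2 * c * v < 1) :
    ∫ x, exp (c * x ^ 2) ∂gaussianReal 0 v = (√(1 - 2 * c * v))⁻¹ := by
  rcases eq_or_ne v 0 with rfl | hv
  · simp [gaussianReal_zero_var]
  have hdensity : ∀ x, gaussianPDFReal 0 v x • exp (c * x ^ 2)
      = (√(2 * π * v))⁻¹ * exp (-(1 / (2 * v) - c) * x ^ 2) := by
    intro x
    rw [gaussianPDFReal, smul_eq_mul, mul_assoc, ← exp_add]
    congr 2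
    field_simp
    ring
  have hpos : 0 < 1 - 2 * c * v := by linarith
  rw [integral_gaussianReal_eq_integral_smul hv]
  simp_rw [hdensity, integral_const_mul, integral_gaussian]
  rw [show π / (1 / (2 * v) - c) = 2 * π * v / (1 - 2 * c * v) by field_simp,
    sqrt_div' _ hpos.le, ← div_eq_inv_mul, div_div_cancel_left' (by positivity)]

lemma map_pi_gaussianReal_sum_mul {ι : Type*} [Fintype ι] (v : ι → ℝ) :
    (Measure.pi fun _ : ι ↦ gaussianReal 0 1).map (fun w ↦ ∑ j, w j * v j)
      = gaussianReal 0 (∑ j, v j ^ 2).toNNReal := by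
  have hf : (fun w : ι → ℝ ↦ ∑ j, w j * v j)
      = innerSL ℝ (WithLp.toLp 2 v) ∘ WithLp.toLp 2 := by
    ext w; simp [PiLp.inner_apply, mul_comm]
  rw [hf, ← Measure.map_map (by fun_prop) (by fun_prop), map_pi_eq_stdGaussian,
    IsGaussian.map_eq_gaussianReal, integral_strongDual_stdGaussian,
    variance_dual_stdGaussian, innerSL_apply_norm, EuclideanSpace.real_norm_sq_eq]

lemma integral_exp_mul_sq_sum_mul_pi_gaussianReal {ι : Type*} [Fintype ι] (v : ι → ℝ) {c : ℝ}
    (h : 2 * c * ∑ j, v j ^ 2 < 1) :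
    ∫ w, exp (c * (∑ j, w j * v j) ^ 2) ∂(Measure.pi fun _ : ι ↦ gaussianReal 0 1)
      = (√(1 - 2 * c * ∑ j, v j ^ 2))⁻¹ := by
  have hS : ((∑ j, v j ^ 2).toNNReal : ℝ) = ∑ j, v j ^ 2 := Real.coe_toNNReal _ (by positivity)
  rw [← integral_map (f := fun x ↦ exp (c * x ^ 2)) (Measurable.aemeasurable (by fun_prop))
      (by fun_prop),
    map_pi_gaussianReal_sum_mul, integral_exp_mul_sq_gaussianReal (by rwa [hS]), hS]

instance isProbabilityMeasure_gaussMatrix (d n : ℕ) : IsProbabilityMeasure (gaussMatrix d n) := by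
  unfold gaussMatrix; infer_instance

lemma mgf_sq_norm2_mulVec'_gaussMatrix {d n : ℕ} (v : Fin n → ℝ) {t : ℝ}
    (h : 2 * t * norm2 v ^ 2 < 1) :
    mgf (fun A ↦ norm2 (mulVec' A v) ^ 2) (gaussMatrix d n) t
      = exp (-(d / 2) * log (1 - 2 * t * norm2 v ^ 2)) := by
  have hprod : ∀ A : Fin d → Fin n → ℝ,
      exp (t * norm2 (mulVec' A v) ^ 2) = ∏ i, exp (t * (∑ j, A i j * v j) ^ 2) := by
    intro A
    rw [norm2_sq, Finset.mul_sum, exp_sum]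
    rfl
  have hpos : 0 < 1 - 2 * t * norm2 v ^ 2 := by linarith
  rw [norm2_sq] at h hpos
  simp_rw [mgf, hprod, norm2_sq]
  rw [gaussMatrix,
    integral_fintype_prod_eq_pow (ι := Fin d) (fun w : Fin n → ℝ ↦ exp (t * (∑ j, w j * v j) ^ 2)),
    integral_exp_mul_sq_sum_mul_pi_gaussianReal v h, Fintype.card_fin]
  rw [← exp_log (by positivity : 0 < (√(1 - 2 * t * ∑ j, v j ^ 2))⁻¹ ^ d), log_pow, log_inv,
    log_sqrt hpos.le]
  ring_nf

lemma integrable_exp_mul_sq_norm2_mulVec' {d n : ℕ} (v : Fin n → ℝ) {t : ℝ}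
    (h : 2 * t * norm2 v ^ 2 < 1) :
    Integrable (fun A ↦ exp (t * norm2 (mulVec' A v) ^ 2)) (gaussMatrix d n) :=
  Integrable.of_integral_ne_zero <| by
    rw [← mgf, mgf_sq_norm2_mulVec'_gaussMatrix v h]
    exact (exp_pos _).ne'

lemma gaussMatrix_real_sq_norm2_mulVec'_le_le {d n : ℕ} (v : Fin n → ℝ) {t : ℝ} (ht : t ≤ 0)
    (ε : ℝ) :
    (gaussMatrix d n).real {A | norm2 (mulVec' A v) ^ 2 ≤ ε}
      ≤ exp (-t * ε - d / 2 * log (1 - 2 * t * norm2 v ^ 2)) := by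
  have h : 2 * t * norm2 v ^ 2 < 1 := by nlinarith [sq_nonneg (norm2 v)]
  calc _ ≤ exp (-t * ε) * mgf (fun A ↦ norm2 (mulVec' A v) ^ 2) (gaussMatrix d n) t :=
        measure_le_le_exp_mul_mgf ε ht (integrable_exp_mul_sq_norm2_mulVec' v h)
    _ = _ := by rw [mgf_sq_norm2_mulVec'_gaussMatrix v h, ← exp_add]; ring_nf

lemma gaussMatrix_real_le_sq_norm2_mulVec'_le {d n : ℕ} (v : Fin n → ℝ) {t : ℝ} (ht : 0 ≤ t)
    (h : 2 * t * norm2 v ^ 2 < 1) (ε : ℝ) :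
    (gaussMatrix d n).real {A | ε ≤ norm2 (mulVec' A v) ^ 2}
      ≤ exp (-t * ε - d / 2 * log (1 - 2 * t * norm2 v ^ 2)) := by
  calc _ ≤ exp (-t * ε) * mgf (fun A ↦ norm2 (mulVec' A v) ^ 2) (gaussMatrix d n) t :=
        measure_ge_le_exp_mul_mgf ε ht (integrable_exp_mul_sq_norm2_mulVec' v h)
    _ = _ := by rw [mgf_sq_norm2_mulVec'_gaussMatrix v h, ← exp_add]; ring_nf

lemma gaussMatrix_real_sq_norm2_mulVec'_lt_le {d n : ℕ} (v : Fin n → ℝ) {τ : ℝ}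
    (hτ : τ ∈ Set.Ioo (0 : ℝ) 1) :
    (gaussMatrix d n).real {A | norm2 (mulVec' A v) ^ 2 < (1 - τ) * d * norm2 v ^ 2}
      ≤ exp (d / 2 * (τ + log (1 - τ))) := by
  obtain ⟨hτ₀, hτ₁⟩ := hτ
  rcases (norm2_nonneg v).eq_or_lt with hv | hv
  · simp [← hv, not_lt_of_ge (sq_nonneg _), (exp_pos _).le]
  set t := -τ / (2 * norm2 v ^ 2 * (1 - τ)) with ht_def
  have htS : t * norm2 v ^ 2 * (1 - τ) = -τ / 2 := by
    rw [ht_def]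
    field_simp [hv.ne']
  have ht : t ≤ 0 := div_nonpos_of_nonpos_of_nonneg (by linarith) (by nlinarith)
  have hlog : 1 - 2 * t * norm2 v ^ 2 = (1 - τ)⁻¹ := by
    field_simp
    linear_combination (-2) * htS
  calc _ ≤ (gaussMatrix d n).real {A | norm2 (mulVec' A v) ^ 2 ≤ (1 - τ) * d * norm2 v ^ 2} :=
        measureReal_mono fun A hA ↦ le_of_lt hA
    _ ≤ _ := gaussMatrix_real_sq_norm2_mulVec'_le_le v ht _
    _ = _ := by
      rw [hlog, log_inv]
      congr 1
      linear_combination (-(d : ℝ)) * htS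

lemma gaussMatrix_real_lt_sq_norm2_mulVec'_le {d n : ℕ} (v : Fin n → ℝ) {τ : ℝ} (hτ : 0 < τ) :
    (gaussMatrix d n).real {A | (1 + τ) * d * norm2 v ^ 2 < norm2 (mulVec' A v) ^ 2}
      ≤ exp (-(d / 2) * (τ - log (1 + τ))) := by
  rcases (norm2_nonneg v).eq_or_lt with hv | hv
  · obtain rfl : v = 0 := norm2_eq_zero.mp hv.symm
    simp [mulVec'_zero, norm2_eq_zero.mpr, (exp_pos _).le]
  set t := τ / (2 * norm2 v ^ 2 * (1 + τ)) with ht_def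
  have htS : t * norm2 v ^ 2 * (1 + τ) = τ / 2 := by
    rw [ht_def]
    field_simp [hv.ne']
  have ht : 0 ≤ t := by positivity
  have hlog : 1 - 2 * t * norm2 v ^ 2 = (1 + τ)⁻¹ := by
    field_simp
    linear_combination (-2) * htS
  calc _ ≤ (gaussMatrix d n).real {A | (1 + τ) * d * norm2 v ^ 2 ≤ norm2 (mulVec' A v) ^ 2} :=
        measureReal_mono fun A hA ↦ le_of_lt hA
    _ ≤ _ := gaussMatrix_real_le_sq_norm2_mulVec'_le v ht (by nlinarith) _
    _ = _ := by
      rw [hlog, log_inv]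
      congr 1
      linear_combination (-(d : ℝ)) * htS

lemma one_sub_measureReal_le_of_compl_subset {α : Type*} [MeasurableSpace α] {μ : Measure α}
    [IsProbabilityMeasure μ] {s t : Set α} (h : sᶜ ⊆ t) : 1 - μ.real t ≤ μ.real s := by
  have hcover := measureReal_union_le (μ := μ) s sᶜ
  rw [Set.union_compl_self, probReal_univ] at hcover
  linarith [measureReal_mono (μ := μ) h]

lemma one_sub_le_gaussMatrix_real_of_restrictedIsometry {d n : ℕ} (C : Finset (Fin n → ℝ))
    (x_o xtil : Fin n → ℝ) {τ₁ τ₂ : ℝ} (hτ₁ : 0 < τ₁) (hτ₂ : τ₂ ∈ Set.Ioo (0 : ℝ) 1)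
    (s : Set (Fin d → Fin n → ℝ))
    (hs : ∀ A, (∀ c ∈ C, (1 - τ₂) * d * norm2 (c - x_o) ^ 2 ≤ norm2 (mulVec' A (c - x_o)) ^ 2) →
      norm2 (mulVec' A (x_o - xtil)) ^ 2 ≤ (1 + τ₁) * d * norm2 (x_o - xtil) ^ 2 → A ∈ s) :
    1 - C.card * exp (d / 2 * (τ₂ + log (1 - τ₂))) - exp (-(d / 2) * (τ₁ - log (1 + τ₁)))
      ≤ (gaussMatrix d n).real s := by
  set failure :=
    (⋃ c ∈ C, {A | norm2 (mulVec' A (c - x_o)) ^ 2 < (1 - τ₂) * d * norm2 (c - x_o) ^ 2})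
      ∪ {A | (1 + τ₁) * d * norm2 (x_o - xtil) ^ 2 < norm2 (mulVec' A (x_o - xtil)) ^ 2}
  have hfailure : (gaussMatrix d n).real failure
      ≤ C.card • exp (d / 2 * (τ₂ + log (1 - τ₂))) + exp (-(d / 2) * (τ₁ - log (1 + τ₁))) :=
    (measureReal_union_le _ _).trans <| add_le_add
      ((measureReal_biUnion_finset_le _ _).trans <| Finset.sum_le_card_nsmul _ _ _
        fun c _ ↦ gaussMatrix_real_sq_norm2_mulVec'_lt_le _ hτ₂)
      (gaussMatrix_real_lt_sq_norm2_mulVec'_le _ hτ₁)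
  have hsub : sᶜ ⊆ failure := by
    intro A hA
    by_contra hgood
    simp only [failure, Set.mem_union, Set.mem_iUnion, Set.mem_ofPred_eq, not_or, not_exists,
      not_lt] at hgood
    exact hA (hs A hgood.1 hgood.2)
  rw [nsmul_eq_mul] at hfailure
  linarith [one_sub_measureReal_le_of_compl_subset (μ := gaussMatrix d n) hsub]

section CSP

variable {d n : ℕ} {C : Finset (Fin n → ℝ)} {A : Fin d → Fin n → ℝ} {x_o xtil xhat : Fin n → ℝ}
  {z : Fin d → ℝ}

lemma IsCSPEstimate.norm2_mulVec'_sub_le (hxhat : IsCSPEstimate C A (mulVec' A x_o + z) xhat)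
    (hxtil : xtil ∈ C) :
    norm2 (mulVec' A (xhat - x_o)) ≤ norm2 (mulVec' A (x_o - xtil)) + 2 * norm2 z := by
  calc norm2 (mulVec' A (xhat - x_o))
        = norm2 ((mulVec' A xhat - (mulVec' A x_o + z)) + z) := by
        rw [mulVec'_sub]; congr 1; abel
    _ ≤ norm2 (mulVec' A x_o + z - mulVec' A xhat) + norm2 z := by
        rw [← norm2_sub_comm]; exact norm2_add_le _ _
    _ ≤ norm2 (mulVec' A x_o + z - mulVec' A xtil) + norm2 z := by
        gcongr; exact hxhat.2 xtil hxtil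
    _ = norm2 (mulVec' A (x_o - xtil) + z) + norm2 z := by
        rw [mulVec'_sub]; congr 2; abel
    _ ≤ _ := by linarith [norm2_add_le (mulVec' A (x_o - xtil)) z]

lemma IsCSPEstimate.norm2_sub_le {a b δ ζ : ℝ} (ha : 0 < a)
    (hxhat : IsCSPEstimate C A (mulVec' A x_o + z) xhat) (hxtil : xtil ∈ C)
    (hdist : norm2 (x_o - xtil) ≤ δ) (hz : norm2 z ≤ ζ)
    (hlow : a * norm2 (xhat - x_o) ^ 2 ≤ norm2 (mulVec' A (xhat - x_o)) ^ 2)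
    (hup : norm2 (mulVec' A (x_o - xtil)) ^ 2 ≤ b * norm2 (x_o - xtil) ^ 2) :
    norm2 (xhat - x_o) ≤ δ * √(b / a) + 2 * ζ / √a := by
  have hlow' : √a * norm2 (xhat - x_o) ≤ norm2 (mulVec' A (xhat - x_o)) := by
    rw [← sq_le_sq₀ (by positivity [norm2_nonneg (xhat - x_o)]) (norm2_nonneg _), mul_pow,
      sq_sqrt ha.le]
    exact hlow
  have hup' : norm2 (mulVec' A (x_o - xtil)) ≤ √b * δ :=
    calc _ ≤ √(b * norm2 (x_o - xtil) ^ 2) := (le_abs_self _).trans (abs_le_sqrt hup)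
      _ = √b * norm2 (x_o - xtil) := by rw [sqrt_mul' _ (sq_nonneg _), sqrt_sq (norm2_nonneg _)]
      _ ≤ √b * δ := by gcongr
  calc norm2 (xhat - x_o) ≤ (√b * δ + 2 * ζ) / √a := by
        rw [le_div_iff₀ (sqrt_pos.mpr ha)]
        linarith [hxhat.norm2_mulVec'_sub_le hxtil]
    _ = _ := by rw [sqrt_div' _ ha.le]; ring

end CSP

theorem csp_deterministic_noise_individual_general
    (n d r : ℕ) (hd : 1 ≤ d)
    (δ : ℝ) (x_o : Fin n → ℝ)
    (C : Finset (Fin n → ℝ)) (hCcard : C.card ≤ 2 ^ r)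
    (xtil : Fin n → ℝ) (hxtil : xtil ∈ C) (hdist : norm2 (x_o - xtil) ≤ δ)
    (τ₁ τ₂ ζ : ℝ) (hτ₁ : 0 < τ₁) (hτ₂ : τ₂ ∈ Set.Ioo (0 : ℝ) 1) :
    1 - 2 ^ r * Real.exp (((d : ℝ) / 2) * (τ₂ + Real.log (1 - τ₂)))
        - Real.exp (-((d : ℝ) / 2) * (τ₁ - Real.log (1 + τ₁)))
      ≤ (gaussMatrix d n {A | ∀ z : Fin d → ℝ, norm2 z ≤ ζ →
          ∀ xhat, IsCSPEstimate C A (mulVec' A x_o + z) xhat →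
          norm2 (xhat - x_o)
            ≤ δ * Real.sqrt ((1 + τ₁) / (1 - τ₂))
              + 2 * ζ / Real.sqrt ((1 - τ₂) * d)}).toReal := by
  have hd₀ : (0 : ℝ) < d := by exact_mod_cast hd
  have hcard : (C.card : ℝ) ≤ 2 ^ r := by exact_mod_cast hCcard
  refine le_trans ?_ (one_sub_le_gaussMatrix_real_of_restrictedIsometry C x_o xtil hτ₁ hτ₂ _
    fun A hlow hup z hz xhat hxhat ↦ ?_)
  · nlinarith [exp_pos (d / 2 * (τ₂ + log (1 - τ₂)))]
  have hrec := hxhat.norm2_sub_le (mul_pos (by linarith [hτ₂.2]) hd₀) hxtil hdist hz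
    (hlow xhat hxhat.1) hup
  rwa [mul_div_mul_right _ _ hd₀.ne'] at hrec

/-- Theorem 2 (CSP, individual recovery under deterministic noise). -/
theorem csp_deterministic_noise_individual
    (n d r : ℕ) (hd : 1 ≤ d)
    (δ : ℝ) (hδ : 0 < δ) (x_o : Fin n → ℝ)
    (C : Finset (Fin n → ℝ)) (hCne : C.Nonempty) (hCcard : C.card ≤ 2 ^ r)
    (xtil : Fin n → ℝ) (hxtil : xtil ∈ C) (hdist : norm2 (x_o - xtil) ≤ δ)
    (τ₁ τ₂ ζ : ℝ) (hτ₁ : 0 < τ₁) (hτ₂ : τ₂ ∈ Set.Ioo (0 : ℝ) 1) (hζ : 0 ≤ ζ) :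
    1 - 2 ^ r * Real.exp (((d : ℝ) / 2) * (τ₂ + Real.log (1 - τ₂)))
        - Real.exp (-((d : ℝ) / 2) * (τ₁ - Real.log (1 + τ₁)))
      ≤ (gaussMatrix d n {A | ∀ z : Fin d → ℝ, norm2 z ≤ ζ →
          ∀ xhat, IsCSPEstimate C A (mulVec' A x_o + z) xhat →
          norm2 (xhat - x_o)
            ≤ δ * Real.sqrt ((1 + τ₁) / (1 - τ₂))
              + 2 * ζ / Real.sqrt ((1 - τ₂) * d)}).toReal :=
  csp_deterministic_noise_individual_general n d r hd δ x_o C hCcard xtil hxtil hdist τ₁ τ₂ ζ hτ₁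
    hτ₂
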